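/- Let (Ω, H, P) be a probability space, let (H_t)_{t≥0} be a filtration of sub-σ-algebras of H, and let K₁ ⊆ K₂ be two sub-σ-algebras of H. Let (U¹_t)_{t≥0} and (U²_t)_{t≥0} be real-valued integrable processes such that: for every t ≥ 0, U¹_t is K₂-measurable and U²_t is H_t-measurable; for all 0 ≤ s ≤ t, E[U¹_t | H_s ⊔ K₁] = U¹_s P-a.s. and E[U²_t | H_s ⊔ K₂] = U²_s P-a.s.; and E|U¹_t U²_t| < ∞ for every t ≥ 0. Then for all 0 ≤ s ≤ t, E[U¹_t U²_t | H_s ⊔ K₁] = U¹_s U²_s P-a.s.; that is, the product U¹_t U²_t is a martingale with respect to (H_t) given K₁. -/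

import Mathlib

open MeasureTheory Filter
open scoped NNReal

section

variable {Ω : Type*} {m m₀ : MeasurableSpace Ω} {μ : Measure Ω}

theorem condExp_mul_ae_eq_of_stronglyMeasurable_left {f g g' : Ω → ℝ}
    (hf : StronglyMeasurable[m] f) (hfg : Integrable (f * g) μ) (hg : Integrable g μ)
    (hg' : μ[g | m] =ᵐ[μ] g') : μ[f * g | m] =ᵐ[μ] f * g' :=
  (condExp_mul_of_stronglyMeasurable_left hf hfg hg).trans (EventuallyEq.rfl.mul hg')

theorem condExp_mul_ae_eq_of_stronglyMeasurable_right {f f' g : Ω → ℝ}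
    (hg : StronglyMeasurable[m] g) (hfg : Integrable (f * g) μ) (hf : Integrable f μ)
    (hf' : μ[f | m] =ᵐ[μ] f') : μ[f * g | m] =ᵐ[μ] f' * g :=
  (condExp_mul_of_stronglyMeasurable_right hg hfg hf).trans (hf'.mul EventuallyEq.rfl)

/-- Condition on the larger σ-algebra `m₂` first, where `f` is known and `g` averages to `g'`;
then on `m₁`, where `g'` is known and `f` averages to `f'`. -/
theorem condExp_mul_ae_eq_of_le {m₁ m₂ : MeasurableSpace Ω} (hm₁₂ : m₁ ≤ m₂) (hm₂ : m₂ ≤ m₀)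
    [SigmaFinite (μ.trim hm₂)] {f f' g g' : Ω → ℝ}
    (hf : StronglyMeasurable[m₂] f) (hg' : StronglyMeasurable[m₁] g')
    (hf_int : Integrable f μ) (hg_int : Integrable g μ) (hfg : Integrable (f * g) μ)
    (hff' : μ[f | m₁] =ᵐ[μ] f') (hgg' : μ[g | m₂] =ᵐ[μ] g') :
    μ[f * g | m₁] =ᵐ[μ] f' * g' := by
  have hfg' : μ[f * g | m₂] =ᵐ[μ] f * g' :=
    condExp_mul_ae_eq_of_stronglyMeasurable_left hf hfg hg_int hgg'
  calc μ[f * g | m₁] =ᵐ[μ] μ[μ[f * g | m₂] | m₁] := (condExp_condExp_of_le hm₁₂ hm₂).symm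
    _ =ᵐ[μ] μ[f * g' | m₁] := condExp_congr_ae hfg'
    _ =ᵐ[μ] f' * g' := condExp_mul_ae_eq_of_stronglyMeasurable_right hg'
        (integrable_condExp.congr hfg') hf_int hff'

end

theorem product_conditional_martingale_general
    {Ω : Type*} [m0 : MeasurableSpace Ω] (P : Measure Ω) [IsProbabilityMeasure P]
    (H : ℝ≥0 → MeasurableSpace Ω) (hH_le : ∀ t, H t ≤ m0)
    (K1 K2 : MeasurableSpace Ω) (hK12 : K1 ≤ K2) (hK2 : K2 ≤ m0)
    (U1 U2 : ℝ≥0 → Ω → ℝ)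
    (hU1_int : ∀ t, Integrable (U1 t) P) (hU2_int : ∀ t, Integrable (U2 t) P)
    (hU1_meas : ∀ t, Measurable[K2] (U1 t))
    (hU2_meas : ∀ t, Measurable[H t] (U2 t))
    (hU1_mart : ∀ s t, s ≤ t → P[U1 t | H s ⊔ K1] =ᵐ[P] U1 s)
    (hU2_mart : ∀ s t, s ≤ t → P[U2 t | H s ⊔ K2] =ᵐ[P] U2 s)
    (h_prod_int : ∀ t, Integrable (fun ω => U1 t ω * U2 t ω) P) :
    ∀ s t, s ≤ t →
      P[fun ω => U1 t ω * U2 t ω | H s ⊔ K1] =ᵐ[P] fun ω => U1 s ω * U2 s ω := by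
  intro s t hst
  exact condExp_mul_ae_eq_of_le (sup_le_sup_left hK12 (H s)) (sup_le (hH_le s) hK2)
    ((hU1_meas t).mono (le_sup_right (a := H s)) le_rfl).stronglyMeasurable
    ((hU2_meas s).mono (le_sup_left (b := K1)) le_rfl).stronglyMeasurable
    (hU1_int t) (hU2_int t) (h_prod_int t) (hU1_mart s t hst) (hU2_mart s t hst)

/-- Lemma 2.2 (product of conditional martingales): if `U¹` is a martingale with
respect to `(H_t)` given `K₁`, `U²` is a martingale with respect to `(H_t)` given `K₂`,
`K₁ ⊆ K₂`, `U¹_t` is `K₂`-measurable, `U²_t` is `H_t`-measurable and the products are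
integrable, then `U¹ U²` is a martingale with respect to `(H_t)` given `K₁`. -/
theorem product_conditional_martingale
    {Ω : Type*} [m0 : MeasurableSpace Ω] (P : Measure Ω) [IsProbabilityMeasure P]
    (H : ℝ≥0 → MeasurableSpace Ω) (hH_mono : Monotone H) (hH_le : ∀ t, H t ≤ m0)
    (K1 K2 : MeasurableSpace Ω) (hK12 : K1 ≤ K2) (hK2 : K2 ≤ m0)
    (U1 U2 : ℝ≥0 → Ω → ℝ)
    (hU1_int : ∀ t, Integrable (U1 t) P) (hU2_int : ∀ t, Integrable (U2 t) P)
    (hU1_meas : ∀ t, Measurable[K2] (U1 t))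
    (hU2_meas : ∀ t, Measurable[H t] (U2 t))
    (hU1_mart : ∀ s t, s ≤ t → P[U1 t | H s ⊔ K1] =ᵐ[P] U1 s)
    (hU2_mart : ∀ s t, s ≤ t → P[U2 t | H s ⊔ K2] =ᵐ[P] U2 s)
    (h_prod_int : ∀ t, Integrable (fun ω => U1 t ω * U2 t ω) P) :
    ∀ s t, s ≤ t →
      P[fun ω => U1 t ω * U2 t ω | H s ⊔ K1] =ᵐ[P] fun ω => U1 s ω * U2 s ω :=
  product_conditional_martingale_general (m0 := m0) P H hH_le K1 K2 hK12 hK2 U1 U2 hU1_int hU2_int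
    hU1_meas hU2_meas hU1_mart hU2_mart h_prod_int
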